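/- arXiv:2202.10966 — 5 statements merged into one kernel-verified Lean document; each statement's English description precedes it below -/
import Mathlib

section
/- For every real number x with 0 ≤ x ≤ π/2, it holds that cos x ≤ 1 − x²/π. -/
open Real

theorem cos_le_one_sub_sq_div_pi (x : ℝ) (h0 : 0 ≤ x) (h1 : x ≤ π / 2) :
    Real.cos x ≤ 1 - x ^ 2 / π := by
  have key : MonotoneOn (fun y : ℝ => 1 - y ^ 2 / π - Real.cos y) (Set.Icc 0 (π / 2)) := by
    apply monotoneOn_of_deriv_nonneg (convex_Icc _ _)
    · fun_prop
    · intro y hy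
      exact (((differentiable_const 1).sub ((differentiable_pow 2).div_const π)).sub
        Real.differentiable_cos).differentiableAt.differentiableWithinAt
    · intro y hy
      rw [interior_Icc] at hy
      have hd : deriv (fun y : ℝ => 1 - y ^ 2 / π - Real.cos y) y
          = -(2 * y / π) + Real.sin y := by
        have : HasDerivAt (fun y : ℝ => 1 - y ^ 2 / π - Real.cos y)
            (-(2 * y / π) + Real.sin y) y := by
          have h1 : HasDerivAt (fun y : ℝ => 1 - y ^ 2 / π) (-(2 * y / π)) y := by
            have := ((hasDerivAt_pow 2 y).div_const π).const_sub 1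
            simpa using this.congr_deriv (by ring)
          simpa [sub_eq_add_neg, Pi.add_def, Pi.neg_apply] using h1.add ((Real.hasDerivAt_cos y).neg)
        exact this.deriv
      rw [hd]
      have := Real.mul_le_sin hy.1.le (hy.2.le)
      linarith [this, show (2 / π * y : ℝ) = 2 * y / π by ring]
  have h := key (Set.left_mem_Icc.2 (by positivity)) (Set.mem_Icc.2 ⟨h0, h1⟩) h0
  simp at h
  linarith
end

section
/- Let Ω be a finite set, F : Ω → ℝ≥0 with ∑_ω F(ω) = 1, r : Ω → [0,1], p : Ω → ℝ≥0, and ε ∈ (0,1]. Define p̂(ω) := (1−√ε)·p(ω) + √ε·r(ω). Suppose G : Ω → ℝ≥0 with ∑_ω G(ω) = 1 and real numbers c_F, c_G ∈ ℝ satisfy (i) ∑_ω G(ω)·p̂(ω) − c_G ≥ ∑_ω F(ω)·p̂(ω) − c_F and (ii) ∑_ω F(ω)·p(ω) − c_F ≥ ∑_ω G(ω)·p(ω) − c_G − ε. Then ∑_ω G(ω)·(r(ω) − p̂(ω)) ≥ ∑_ω F(ω)·(r(ω) − p(ω)) − 2√ε. -/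
open Finset

/-!
Adding the agent's preference for `G` under `p̂` to the `ε`-incentive compatibility of `F` under
`p` cancels the costs and leaves `√ε · (E_F[r - p] - E_G[r - p]) ≤ ε`, so the principal's utility
under `p` drops by at most `√ε`. Replacing `p` by `p̂` costs the principal a further
`√ε · E_G[r - p] ≤ √ε`, because `r ≤ 1 ≤ 1 + p`.
-/

theorem sum_mul_affineCombo {ι R : Type*} [CommRing R] (s : Finset ι) (w p r : ι → R) (t : R) :
    ∑ i ∈ s, w i * ((1 - t) * p i + t * r i) =
      (1 - t) * ∑ i ∈ s, w i * p i + t * ∑ i ∈ s, w i * r i := by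
  simp only [mul_sum, ← sum_add_distrib]
  exact sum_congr rfl fun i _ => by ring

theorem sum_mul_le_sum_of_le_one {ι : Type*} {s : Finset ι} {w f : ι → ℝ}
    (hw : ∀ i ∈ s, 0 ≤ w i) (hf : ∀ i ∈ s, f i ≤ 1) :
    ∑ i ∈ s, w i * f i ≤ ∑ i ∈ s, w i :=
  sum_le_sum fun i hi => mul_le_of_le_one_right (hw i hi) (hf i hi)

/-- `pX`, `rX` are the expected payment and reward under action `X`, and `s = √ε`. -/
theorem principal_utility_drop_le {s pF pG rF rG cF cG : ℝ} (hs : 0 < s)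
    (hbest : (1 - s) * pF + s * rF - cF ≤ (1 - s) * pG + s * rG - cG)
    (happrox : pG - cG - s ^ 2 ≤ pF - cF) (hG : rG - pG ≤ 1) :
    rF - pF - 2 * s ≤ (1 - s) * (rG - pG) := by
  have hshift : rF - pF - s ≤ rG - pG :=
    le_of_mul_le_mul_left (by linear_combination hbest + happrox) hs
  have hscaled : s * (rG - pG) ≤ s := mul_le_of_le_one_right hs.le hG
  linarith

theorem toIC_core_inequality_general {Ω : Type*} [Fintype Ω]
    (F G : Ω → ℝ)
    (hG0 : ∀ ω, 0 ≤ G ω) (hG1 : ∑ ω, G ω = 1)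
    (r p : Ω → ℝ) (hr1 : ∀ ω, r ω ≤ 1) (hp : ∀ ω, 0 ≤ p ω)
    (ε : ℝ) (hε0 : 0 < ε)
    (cF cG : ℝ)
    (h1 : ∑ ω, G ω * ((1 - Real.sqrt ε) * p ω + Real.sqrt ε * r ω) - cG ≥
          ∑ ω, F ω * ((1 - Real.sqrt ε) * p ω + Real.sqrt ε * r ω) - cF)
    (h2 : ∑ ω, F ω * p ω - cF ≥ ∑ ω, G ω * p ω - cG - ε) :
    ∑ ω, G ω * (r ω - ((1 - Real.sqrt ε) * p ω + Real.sqrt ε * r ω)) ≥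
      ∑ ω, F ω * (r ω - p ω) - 2 * Real.sqrt ε := by
  set s := Real.sqrt ε
  have hs : 0 < s := Real.sqrt_pos.2 hε0
  have hsq : s ^ 2 = ε := Real.sq_sqrt hε0.le
  rw [sum_mul_affineCombo, sum_mul_affineCombo] at h1
  have hG : ∑ ω, G ω * r ω - ∑ ω, G ω * p ω ≤ 1 := by
    rw [← sum_sub_distrib, ← hG1]
    simp only [← mul_sub]
    exact sum_mul_le_sum_of_le_one (fun ω _ => hG0 ω) fun ω _ => by linarith [hr1 ω, hp ω]
  have hdrop := principal_utility_drop_le hs h1 (hsq ▸ h2) hG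
  simp only [mul_sub, sum_sub_distrib, sum_mul_affineCombo]
  linarith

theorem toIC_core_inequality {Ω : Type*} [Fintype Ω]
    (F G : Ω → ℝ) (hF0 : ∀ ω, 0 ≤ F ω) (hF1 : ∑ ω, F ω = 1)
    (hG0 : ∀ ω, 0 ≤ G ω) (hG1 : ∑ ω, G ω = 1)
    (r p : Ω → ℝ) (hr0 : ∀ ω, 0 ≤ r ω) (hr1 : ∀ ω, r ω ≤ 1) (hp : ∀ ω, 0 ≤ p ω)
    (ε : ℝ) (hε0 : 0 < ε) (hε1 : ε ≤ 1)
    (cF cG : ℝ)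
    (h1 : ∑ ω, G ω * ((1 - Real.sqrt ε) * p ω + Real.sqrt ε * r ω) - cG ≥
          ∑ ω, F ω * ((1 - Real.sqrt ε) * p ω + Real.sqrt ε * r ω) - cF)
    (h2 : ∑ ω, F ω * p ω - cF ≥ ∑ ω, G ω * p ω - cG - ε) :
    ∑ ω, G ω * (r ω - ((1 - Real.sqrt ε) * p ω + Real.sqrt ε * r ω)) ≥
      ∑ ω, F ω * (r ω - p ω) - 2 * Real.sqrt ε :=
  toIC_core_inequality_general F G hG0 hG1 r p hr1 hp ε hε0 cF cG h1 h2
end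

section
/- Let Ω = {ω₀, ω₁} with rewards r(ω₀) ≤ r(ω₁) in [0,1]. Let F₀, F₁ ∈ [0,1] denote probabilities of outcome ω₁ under two actions (so outcome ω₀ has probabilities 1−F₀, 1−F₁), with costs c₀, c₁ ∈ [0,1]. Let p̂ : Ω → ℝ≥0 be a contract with p̂(ω₀) = 0 and p̂(ω₁) ≤ r(ω₁) − r(ω₀). If F₁·p̂(ω₁) − c₁ ≥ F₀·p̂(ω₁) − c₀ and F₁·p̂(ω₁) − c₁ ≥ 0 (the action with probability F₁ is the agent's best response to p̂), and moreover p(ω₁) ≥ r(ω₁) − r(ω₀) for some original contract p : Ω → ℝ≥0, then the principal's utility under p̂, namely F₁·(r(ω₁) − p̂(ω₁)) + (1−F₁)·r(ω₀), is at least F₀·(r(ω₁) − p(ω₁)) + (1−F₀)·(r(ω₀) − p(ω₀)). -/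
theorem principalUtility_le_of_gap_le_payment {r0 r1 F p0 p1 : ℝ}
    (hF0 : 0 ≤ F) (hF1 : F ≤ 1) (hp0 : 0 ≤ p0) (hp1 : r1 - r0 ≤ p1) :
    F * (r1 - p1) + (1 - F) * (r0 - p0) ≤ r0 :=
  calc F * (r1 - p1) + (1 - F) * (r0 - p0)
      ≤ F * r0 + (1 - F) * r0 := by gcongr <;> linarith
    _ = r0 := by ring

theorem le_principalUtility_of_payment_le_gap {r0 r1 F p1 : ℝ}
    (hF : 0 ≤ F) (hp1 : p1 ≤ r1 - r0) :
    r0 ≤ F * (r1 - p1) + (1 - F) * r0 :=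
  calc r0 = F * r0 + (1 - F) * r0 := by ring
    _ ≤ F * (r1 - p1) + (1 - F) * r0 := by gcongr; linarith

theorem two_outcome_dominance_general (r0 r1 F0 F1 phat1 p0 p1 : ℝ)
    (hF00 : 0 ≤ F0) (hF01 : F0 ≤ 1) (hF10 : 0 ≤ F1)
    (hphat : phat1 ≤ r1 - r0)
    (hp0 : 0 ≤ p0) (hp1 : r1 - r0 ≤ p1) :
    F0 * (r1 - p1) + (1 - F0) * (r0 - p0) ≤ F1 * (r1 - phat1) + (1 - F1) * r0 :=
  (principalUtility_le_of_gap_le_payment hF00 hF01 hp0 hp1).trans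
    (le_principalUtility_of_payment_le_gap hF10 hphat)

theorem two_outcome_dominance (r0 r1 F0 F1 c0 c1 phat1 p0 p1 : ℝ)
    (hr : r0 ≤ r1) (hr0 : 0 ≤ r0) (hr1 : r1 ≤ 1)
    (hF00 : 0 ≤ F0) (hF01 : F0 ≤ 1) (hF10 : 0 ≤ F1) (hF11 : F1 ≤ 1)
    (hc00 : 0 ≤ c0) (hc01 : c0 ≤ 1) (hc10 : 0 ≤ c1) (hc11 : c1 ≤ 1)
    (hphat0 : 0 ≤ phat1) (hphat : phat1 ≤ r1 - r0)
    (hbr : F0 * phat1 - c0 ≤ F1 * phat1 - c1)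
    (hir : 0 ≤ F1 * phat1 - c1)
    (hp0 : 0 ≤ p0) (hp1 : r1 - r0 ≤ p1) :
    F0 * (r1 - p1) + (1 - F0) * (r0 - p0) ≤ F1 * (r1 - phat1) + (1 - F1) * r0 :=
  two_outcome_dominance_general r0 r1 F0 F1 phat1 p0 p1 hF00 hF01 hF10 hphat hp0 hp1
end

section
/- Let s ≥ 2 be a natural number, ρ := s^{−3}, l ≥ 4 a natural number, and let v, u be naturals with 1 ≤ v, u ≤ s and v ≠ u. Then for all sufficiently large s (with l fixed), (1/4)·cos(π|v−u|/(2s))·(1 − ρ·l·2^{−l+1}) − (1/4 − ρ·l·2^{−l}) ≤ 2^{−l}·( −(l/2)·ρ − (1/(16 s²))·2^l + (1/(8 s²))·ρ·l + ρ·l ) ≤ 0. -/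
open Real

lemma four_mul_le_two_pow_aux (n : ℕ) (h : 4 ≤ n) : 4 * n ≤ 2 ^ n := by
  induction n, h using Nat.le_induction with
  | base => norm_num
  | succ m hm ih =>
    have h4 : 4 ≤ 2 ^ m := le_trans (by omega) ih
    rw [pow_succ]
    omega

set_option maxHeartbeats 1000000 in
theorem completeness_cross_type_utility_nonpos (l : ℕ) (hl : 4 ≤ l) :
    ∃ N : ℕ, ∀ s : ℕ, N ≤ s → 2 ≤ s → ∀ v u : ℕ,
      1 ≤ v → v ≤ s → 1 ≤ u → u ≤ s → v ≠ u →
      ((1 / 4) * Real.cos (π * |(v : ℝ) - (u : ℝ)| / (2 * s)) *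
            (1 - ((s : ℝ))⁻¹ ^ 3 * l * (2 : ℝ) ^ (-(l : ℝ) + 1)) -
          (1 / 4 - ((s : ℝ))⁻¹ ^ 3 * l * (2 : ℝ) ^ (-(l : ℝ))) ≤
        (2 : ℝ) ^ (-(l : ℝ)) *
          (-((l : ℝ) / 2) * ((s : ℝ))⁻¹ ^ 3 - (1 / (16 * (s : ℝ) ^ 2)) * (2 : ℝ) ^ l +
            (1 / (8 * (s : ℝ) ^ 2)) * ((s : ℝ))⁻¹ ^ 3 * l + ((s : ℝ))⁻¹ ^ 3 * l)) ∧
      ((2 : ℝ) ^ (-(l : ℝ)) *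
          (-((l : ℝ) / 2) * ((s : ℝ))⁻¹ ^ 3 - (1 / (16 * (s : ℝ) ^ 2)) * (2 : ℝ) ^ l +
            (1 / (8 * (s : ℝ) ^ 2)) * ((s : ℝ))⁻¹ ^ 3 * l + ((s : ℝ))⁻¹ ^ 3 * l) ≤ 0) := by
  refine ⟨l, ?_⟩
  intro s hls hs2 v u hv1 hvs hu1 hus hvu
  have hs0 : (0:ℝ) < s := by positivity
  have hs2' : (2:ℝ) ≤ s := by exact_mod_cast hs2
  have hls' : (l:ℝ) ≤ s := by exact_mod_cast hls
  obtain ⟨x, hxdef⟩ : ∃ x : ℝ, x = ((s:ℝ))⁻¹ := ⟨_, rfl⟩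
  obtain ⟨t, htdef⟩ : ∃ t : ℝ, t = (2:ℝ) ^ (-(l:ℝ)) := ⟨_, rfl⟩
  have hx0 : 0 < x := by rw [hxdef]; positivity
  have hxs : x * s = 1 := by rw [hxdef]; exact inv_mul_cancel₀ hs0.ne'
  have hxle : x ≤ 1/2 := by
    rw [hxdef, inv_le_comm₀ hs0 (by norm_num)]
    linarith
  have hxl1 : x * l ≤ 1 := by
    calc x * l ≤ x * s := by
          apply mul_le_mul_of_nonneg_left hls' hx0.le
    _ = 1 := hxs
  have ht0 : 0 < t := by rw [htdef]; exact Real.rpow_pos_of_pos (by norm_num) _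
  have hteq : t * (2:ℝ) ^ l = 1 := by
    rw [htdef, ← Real.rpow_natCast (2:ℝ) l, ← Real.rpow_add (by norm_num)]
    simp
  have h2l1 : (2:ℝ) ^ (-(l:ℝ) + 1) = 2 * t := by
    rw [htdef, Real.rpow_add (by norm_num), Real.rpow_one]; ring
  have h4l : (4:ℝ) * l ≤ (2:ℝ) ^ l := by exact_mod_cast four_mul_le_two_pow_aux l hl
  have hlt : (l:ℝ) * t ≤ 1/4 := by
    nlinarith [mul_le_mul_of_nonneg_left h4l ht0.le]
  have ht16 : t ≤ 1/16 := by
    have h16 : (16:ℝ) ≤ (2:ℝ) ^ l := by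
      have : (16:ℝ) ≤ 4 * l := by
        have : (4:ℝ) ≤ l := by exact_mod_cast hl
        linarith
      linarith
    nlinarith [mul_le_mul_of_nonneg_left h16 ht0.le]
  have hl0 : (0:ℝ) ≤ l := by positivity
  -- the cosine bound
  set d : ℝ := |(v : ℝ) - (u : ℝ)| with hddef
  have hd1 : 1 ≤ d := by
    have h : ((v:ℤ) - u) ≠ 0 := sub_ne_zero.mpr (by exact_mod_cast hvu)
    have h2 : (1:ℝ) ≤ |((v:ℤ) - u : ℤ)| := by exact_mod_cast Int.one_le_abs h
    rw [hddef]; push_cast at h2 ⊢; convert h2 using 2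
  have hds : d ≤ s := by
    have hv' : (v:ℝ) ≤ s := by exact_mod_cast hvs
    have hu' : (u:ℝ) ≤ s := by exact_mod_cast hus
    have hv1' : (1:ℝ) ≤ v := by exact_mod_cast hv1
    have hu1' : (1:ℝ) ≤ u := by exact_mod_cast hu1
    rw [hddef, abs_le]; constructor <;> linarith
  have hx2 : x^2 = 1 / (s:ℝ)^2 := by rw [hxdef]; field_simp
  have hcos : Real.cos (π * d / (2 * s)) ≤ 1 - x^2/2 := by
    have hπ : (0:ℝ) < π := Real.pi_pos
    have hθ0 : 0 ≤ π * d / (2 * s) := by positivity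
    have hθπ : π * d / (2 * s) ≤ π := by
      rw [div_le_iff₀ (by positivity)]
      nlinarith
    have hb := Real.cos_le_one_sub_mul_cos_sq (x := π * d / (2 * s))
      (by rwa [abs_of_nonneg hθ0])
    have heq : 2 / π^2 * (π * d / (2 * s))^2 = d^2 / (2 * (s:ℝ)^2) := by
      field_simp
    have hd2 : (1:ℝ) ≤ d^2 := by nlinarith
    have hkey : x^2/2 ≤ 2 / π^2 * (π * d / (2 * s))^2 := by
      rw [heq]
      have h1 : (1:ℝ)/(2*(s:ℝ)^2) ≤ d^2/(2*(s:ℝ)^2) := by gcongr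
      have h2 : x^2/2 = 1/(2*(s:ℝ)^2) := by rw [hx2]; ring
      linarith
    linarith
  -- goal rewrites
  have e1 : (1:ℝ) / (16 * (s:ℝ)^2) = x^2/16 := by
    rw [hx2]; ring
  have e2 : (1:ℝ) / (8 * (s:ℝ)^2) = x^2/8 := by
    rw [hx2]; ring
  rw [← hxdef, ← htdef, e1, e2, h2l1]
  have hq2 : x^3 * ((l:ℝ) * t) ≤ x^2/16 := by
    have h1 : x^3 * ((l:ℝ)*t) = (x^2*t)*(x*l) := by ring
    nlinarith [mul_le_mul_of_nonneg_left hxl1 (mul_nonneg (sq_nonneg x) ht0.le),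
      mul_le_mul_of_nonneg_left ht16 (sq_nonneg x)]
  have hq12 : x^3 * ((l:ℝ) * t) ≤ 1/2 := by nlinarith [sq_nonneg x]
  have expand : t * (-((l:ℝ) / 2) * x ^ 3 - x^2/16 * (2:ℝ)^l + x^2/8 * x ^ 3 * l + x ^ 3 * l)
      = -(x^3*((l:ℝ)*t))/2 - x^2/16 * (t * (2:ℝ)^l) + x^2/8 * (x^3*((l:ℝ)*t)) + x^3*((l:ℝ)*t) := by
    ring
  constructor
  · rw [expand, hteq]
    have hfac : 0 ≤ 1 - x ^ 3 * (l:ℝ) * (2 * t) := by nlinarith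
    set c : ℝ := Real.cos (π * d / (2 * s)) with hcdef
    nlinarith [mul_nonneg (sub_nonneg.2 hcos) hfac,
      mul_nonneg (sq_nonneg x) hfac,
      mul_nonneg (mul_nonneg (mul_nonneg hx0.le (mul_nonneg hx0.le hx0.le)) hl0) ht0.le]
  · rw [expand, hteq]
    have hq0 : 0 ≤ x^3 * ((l:ℝ)*t) := by positivity
    have hx2le : x^2 ≤ 1/4 := by nlinarith
    nlinarith [mul_le_mul_of_nonneg_left hq2 (sq_nonneg x), sq_nonneg x,
      mul_le_mul_of_nonneg_left hx2le (sq_nonneg x),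
      mul_nonneg (sq_nonneg x) hq0]
end

section
/- Let Θ, A, Ω be finite sets, F : Θ → A → Ω → ℝ≥0 with ∑_ω F(θ,a,ω) = 1, c : Θ → A → [0,1], r : Ω → [0,1], μ : Θ → (0,1] with ∑_θ μ(θ) = 1. Suppose Γ = (γ^θ)_θ is a family of finitely supported distributions on contracts p : Ω → ℝ≥0 whose principal expected utility ∑_θ μ(θ)·∑_p γ^θ(p)·∑_ω F(θ,b^θ(p),ω)·(r(ω) − p(ω)) is greater than −1, where b^θ(p) ∈ argmax_a (∑_ω F(θ,a,ω)p(ω) − c(θ,a)). Let F_min := min{F(θ,a,ω) : F(θ,a,ω) > 0} and Y := min_θ μ(θ). If Γ is DSIC, then for every θ, every p in the support of γ^θ, and every ω ∈ Ω with some (θ',a') such that F(θ',a',ω) > 0, it holds that γ^θ(p)·p(ω) ≤ 4/(F_min·Y). -/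
open Finset

theorem bounded_payments_of_dsic {Θ A Ω : Type*}
    [Fintype Θ] [Fintype A] [Fintype Ω] [Nonempty A]
    (F : Θ → A → Ω → ℝ) (hF0 : ∀ θ a ω, 0 ≤ F θ a ω) (hF1 : ∀ θ a, ∑ ω, F θ a ω = 1)
    (c : Θ → A → ℝ) (hc0 : ∀ θ a, 0 ≤ c θ a) (hc1 : ∀ θ a, c θ a ≤ 1)
    (r : Ω → ℝ) (hr0 : ∀ ω, 0 ≤ r ω) (hr1 : ∀ ω, r ω ≤ 1)
    (μ : Θ → ℝ) (hμ0 : ∀ θ, 0 < μ θ) (hμ1 : ∀ θ, μ θ ≤ 1) (hμsum : ∑ θ, μ θ = 1)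
    -- the menu: for each type a finite support of contracts with weights
    (S : Θ → Finset (Ω → ℝ)) (W : Θ → (Ω → ℝ) → ℝ)
    (hS : ∀ θ, ∀ p ∈ S θ, ∀ ω, 0 ≤ p ω)
    (hW0 : ∀ θ, ∀ p ∈ S θ, 0 ≤ W θ p) (hW1 : ∀ θ, ∑ p ∈ S θ, W θ p = 1)
    -- best responses
    (b : Θ → (Ω → ℝ) → A)
    (hb : ∀ θ p a, ∑ ω, F θ a ω * p ω - c θ a ≤
        ∑ ω, F θ (b θ p) ω * p ω - c θ (b θ p))
    -- the principal's expected utility is greater than -1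
    (hutil : -1 < ∑ θ, μ θ * ∑ p ∈ S θ, W θ p * ∑ ω, F θ (b θ p) ω * (r ω - p ω))
    -- lower bounds F_min and Y
    (Fmin Y : ℝ) (hFmin0 : 0 < Fmin)
    (hFmin : ∀ θ a ω, 0 < F θ a ω → Fmin ≤ F θ a ω)
    (hY0 : 0 < Y) (hY : ∀ θ, Y ≤ μ θ)
    -- DSIC
    (hDSIC : ∀ θ θ',
      ∑ p ∈ S θ', W θ' p * (∑ ω, F θ (b θ p) ω * p ω - c θ (b θ p)) ≤
        ∑ p ∈ S θ, W θ p * (∑ ω, F θ (b θ p) ω * p ω - c θ (b θ p))) :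
    ∀ θ, ∀ p ∈ S θ, ∀ ω, (∃ θ' a', 0 < F θ' a' ω) →
      W θ p * p ω ≤ 4 / (Fmin * Y) := by
  intro θ p₀ hp₀ ω₀ hex
  obtain ⟨θ', a', hFa⟩ := hex
  set x := p₀ ω₀ with hxdef
  have hx0 : 0 ≤ x := hS θ p₀ hp₀ ω₀
  have hPnn : ∀ t, 0 ≤ ∑ p ∈ S t, W t p * ∑ ω, F t (b t p) ω * p ω := by
    intro t
    exact Finset.sum_nonneg fun p hp => mul_nonneg (hW0 t p hp)
      (Finset.sum_nonneg fun ω _ => mul_nonneg (hF0 _ _ _) (hS t p hp ω))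
  -- Step 1: the μ-weighted expected payment of type θ' is at most 2/Y
  have hstep1 : ∑ p ∈ S θ', W θ' p * ∑ ω, F θ' (b θ' p) ω * p ω ≤ 2 / Y := by
    have h1 : ∀ t, ∑ p ∈ S t, W t p * ∑ ω, F t (b t p) ω * (r ω - p ω) ≤
        1 - ∑ p ∈ S t, W t p * ∑ ω, F t (b t p) ω * p ω := by
      intro t
      have hterm : ∀ p ∈ S t, W t p * ∑ ω, F t (b t p) ω * (r ω - p ω) ≤
          W t p - W t p * ∑ ω, F t (b t p) ω * p ω := by
        intro p hp
        have hsplit : ∑ ω, F t (b t p) ω * (r ω - p ω)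
            = (∑ ω, F t (b t p) ω * r ω) - ∑ ω, F t (b t p) ω * p ω := by
          rw [← Finset.sum_sub_distrib]
          exact Finset.sum_congr rfl fun ω _ => by ring
        have hrb : ∑ ω, F t (b t p) ω * r ω ≤ 1 := by
          calc ∑ ω, F t (b t p) ω * r ω ≤ ∑ ω, F t (b t p) ω * 1 :=
                Finset.sum_le_sum fun ω _ => mul_le_mul_of_nonneg_left (hr1 ω) (hF0 _ _ _)
            _ = 1 := by simp [hF1]
        have hWp := hW0 t p hp
        rw [hsplit, mul_sub]
        nlinarith
      calc ∑ p ∈ S t, W t p * ∑ ω, F t (b t p) ω * (r ω - p ω)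
          ≤ ∑ p ∈ S t, (W t p - W t p * ∑ ω, F t (b t p) ω * p ω) :=
            Finset.sum_le_sum hterm
        _ = 1 - ∑ p ∈ S t, W t p * ∑ ω, F t (b t p) ω * p ω := by
            rw [Finset.sum_sub_distrib, hW1 t]
    have h2 : ∑ t, μ t * ∑ p ∈ S t, W t p * ∑ ω, F t (b t p) ω * (r ω - p ω)
        ≤ 1 - μ θ' * ∑ p ∈ S θ', W θ' p * ∑ ω, F θ' (b θ' p) ω * p ω := by
      calc ∑ t, μ t * ∑ p ∈ S t, W t p * ∑ ω, F t (b t p) ω * (r ω - p ω)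
          ≤ ∑ t, μ t * (1 - ∑ p ∈ S t, W t p * ∑ ω, F t (b t p) ω * p ω) :=
            Finset.sum_le_sum fun t _ => mul_le_mul_of_nonneg_left (h1 t) (hμ0 t).le
        _ = 1 - ∑ t, μ t * ∑ p ∈ S t, W t p * ∑ ω, F t (b t p) ω * p ω := by
            simp only [mul_sub, mul_one]
            rw [Finset.sum_sub_distrib, hμsum]
        _ ≤ 1 - μ θ' * ∑ p ∈ S θ', W θ' p * ∑ ω, F θ' (b θ' p) ω * p ω := by
            have := Finset.single_le_sum
              (f := fun t => μ t * ∑ p ∈ S t, W t p * ∑ ω, F t (b t p) ω * p ω)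
              (fun t _ => mul_nonneg (hμ0 t).le (hPnn t)) (Finset.mem_univ θ')
            linarith
    have hμP : μ θ' * ∑ p ∈ S θ', W θ' p * ∑ ω, F θ' (b θ' p) ω * p ω < 2 := by
      linarith
    rw [le_div_iff₀ hY0]
    nlinarith [hPnn θ', hY θ']
  -- Step 2: agent θ''s value from contract p₀ is at least Fmin * x - 1
  have hV1 : Fmin * x - 1 ≤ ∑ ω, F θ' (b θ' p₀) ω * p₀ ω - c θ' (b θ' p₀) := by
    have h3 : F θ' a' ω₀ * x ≤ ∑ ω, F θ' a' ω * p₀ ω :=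
      Finset.single_le_sum (f := fun ω => F θ' a' ω * p₀ ω)
        (fun ω _ => mul_nonneg (hF0 _ _ _) (hS θ p₀ hp₀ ω))
        (Finset.mem_univ ω₀)
    have h4 := hb θ' p₀ a'
    have h5 : Fmin ≤ F θ' a' ω₀ := hFmin _ _ _ hFa
    nlinarith [hc1 θ' a', mul_le_mul_of_nonneg_right h5 hx0]
  have hVlow : ∀ p ∈ S θ, -1 ≤ ∑ ω, F θ' (b θ' p) ω * p ω - c θ' (b θ' p) := by
    intro p hp
    obtain ⟨a⟩ := ‹Nonempty A›
    have h4 := hb θ' p a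
    have h6 : 0 ≤ ∑ ω, F θ' a ω * p ω :=
      Finset.sum_nonneg fun ω _ => mul_nonneg (hF0 _ _ _) (hS θ p hp ω)
    linarith [hc1 θ' a]
  -- Lower bound the misreport value
  have hLHS : W θ p₀ * (Fmin * x) - 1 ≤
      ∑ p ∈ S θ, W θ p * (∑ ω, F θ' (b θ' p) ω * p ω - c θ' (b θ' p)) := by
    rw [← Finset.add_sum_erase _ _ hp₀]
    have hrest : ∑ p ∈ (S θ).erase p₀, W θ p * (-1) ≤
        ∑ p ∈ (S θ).erase p₀, W θ p * (∑ ω, F θ' (b θ' p) ω * p ω - c θ' (b θ' p)) :=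
      Finset.sum_le_sum fun p hp => mul_le_mul_of_nonneg_left
        (hVlow p (Finset.mem_of_mem_erase hp)) (hW0 θ p (Finset.mem_of_mem_erase hp))
    have hW01 : W θ p₀ + ∑ p ∈ (S θ).erase p₀, W θ p = 1 := by
      rw [Finset.add_sum_erase _ _ hp₀]; exact hW1 θ
    have hsneg : ∑ p ∈ (S θ).erase p₀, W θ p * (-1)
        = -∑ p ∈ (S θ).erase p₀, W θ p := by
      simp [mul_neg_one]
    have hfirst : W θ p₀ * (Fmin * x - 1) ≤
        W θ p₀ * (∑ ω, F θ' (b θ' p₀) ω * p₀ ω - c θ' (b θ' p₀)) :=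
      mul_le_mul_of_nonneg_left hV1 (hW0 θ p₀ hp₀)
    rw [mul_sub, mul_one] at hfirst
    linarith
  have hRHS : ∑ p ∈ S θ', W θ' p * (∑ ω, F θ' (b θ' p) ω * p ω - c θ' (b θ' p))
      ≤ 2 / Y := by
    refine le_trans (Finset.sum_le_sum fun p hp => ?_) hstep1
    exact mul_le_mul_of_nonneg_left (by linarith [hc0 θ' (b θ' p)]) (hW0 θ' p hp)
  have key : W θ p₀ * (Fmin * x) - 1 ≤ 2 / Y :=
    le_trans hLHS (le_trans (hDSIC θ' θ) hRHS)
  have hY1 : Y ≤ 1 := le_trans (hY θ) (hμ1 θ)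
  have h2Y : 2 / Y * Y = 2 := div_mul_cancel₀ _ (ne_of_gt hY0)
  have key2 : (W θ p₀ * (Fmin * x) - 1) * Y ≤ 2 := by
    calc (W θ p₀ * (Fmin * x) - 1) * Y ≤ 2 / Y * Y :=
          mul_le_mul_of_nonneg_right key hY0.le
      _ = 2 := h2Y
  rw [le_div_iff₀ (by positivity)]
  nlinarith [key2, hY0, hY1]
end
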